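/- arXiv:1811.03117 — 2 statements merged into one kernel-verified Lean document; each statement's English description precedes it below -/
import Mathlib

section
/- Let m and n be integers with |m| ≥ 3 and |n| ≥ 3, and let G = BS(m,n). For every g ∈ G with g ∉ ⟨a⟩, there exist integers i and j such that, setting h = a^i g a^j, the two elements h a h^{-1} a and a h a h^{-1} freely generate a free subgroup of rank 2 in G. -/
/-- The defining relator set of the Baumslag–Solitar group `BS(m, n)`:
`a` is indexed by `false`, `t` by `true`. -/
def bsRels (m n : ℤ) : Set (FreeGroup Bool) :=
  {FreeGroup.of true * FreeGroup.of false ^ m * (FreeGroup.of true)⁻¹ * (FreeGroup.of false ^ n)⁻¹}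

/-- The Baumslag–Solitar group `BS(m, n) = ⟨a, t ∣ t a^m t⁻¹ = a^n⟩`. -/
abbrev BS (m n : ℤ) := PresentedGroup (bsRels m n)

/-- The generator `a` of `BS(m, n)`. -/
def BS.a (m n : ℤ) : BS m n := PresentedGroup.of false

/-- The generator `t` of `BS(m, n)`. -/
def BS.t (m n : ℤ) : BS m n := PresentedGroup.of true
/-- `x` and `y` freely generate a free subgroup of rank 2: the homomorphism from the
free group on two generators sending the generators to `x` and `y` is injective. -/
def FreelyGenerateF2 {G : Type*} [Group G] (x y : G) : Prop :=
  Function.Injective (FreeGroup.lift (fun b : Bool => if b then x else y) : FreeGroup Bool →* G)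

/-!
`BS(m, n)` is the HNN extension of `ℤ = ⟨a⟩` identifying `⟨a ^ m⟩` with `⟨a ^ n⟩`. Multiplying
`g ∉ ⟨a⟩` by powers of `a` on both sides, its reduced form becomes `h = t^u₁ g₁ ⋯ gₖ₋₁ t^uₖ`
with `k ≥ 1`. Put `x = h a h⁻¹ a = (h a h⁻¹) a` and `y = a h a h⁻¹ = a (h a h⁻¹)`. In a reduced
word in `x, y`, two neighbouring factors `h a^±1 h⁻¹` merge only when no power of `a` is left
between them, and never three in a row, so a nontrivial word equals `a^e₀ ∏ h a^sᵢ h⁻¹ a^eᵢ`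
with `0 < |sᵢ| ≤ 2` and `0 < |eᵢ| ≤ 2` except for the last `eᵢ`. As `|m|, |n| ≥ 3`, none of these
`a^sᵢ`, `a^eᵢ` lies in `⟨a ^ m⟩ ∪ ⟨a ^ n⟩`, so expanding `h` gives a reduced word containing `t`,
which is not `1` by Britton's lemma.
-/

theorem FreelyGenerateF2.of_map {G H : Type*} [Group G] [Group H] (f : G →* H) {x y : G}
    (hf : FreelyGenerateF2 (f x) (f y)) : FreelyGenerateF2 x y := by
  have hcomp : f.comp (FreeGroup.lift fun b : Bool => if b then x else y) =
      FreeGroup.lift fun b : Bool => if b then f x else f y := by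
    ext b; cases b <;> simp
  refine Function.Injective.of_comp (f := f) ?_
  rw [← MonoidHom.coe_comp, hcomp]
  exact hf

namespace ConjugatePair

def IsShort (s : ℤ) : Prop := s ≠ 0 ∧ |s| ≤ 2

/-- A letter `(true, ε)` stands for `x ^ (±1)` and `(false, ε)` for `y ^ (±1)`, the sign being
`+` iff `ε`, where `x = h a h⁻¹ a` and `y = a h a h⁻¹`; `letter` writes it as
`a ^ leadExp * (h a ^ midExp h⁻¹) * a ^ trailExp`. -/
def leadExp : Bool × Bool → ℤ
  | (true, true) => 0
  | (true, false) => -1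
  | (false, true) => 1
  | (false, false) => 0

def midExp (c : Bool × Bool) : ℤ := if c.2 then 1 else -1

def trailExp : Bool × Bool → ℤ
  | (true, true) => 1
  | (true, false) => 0
  | (false, true) => 0
  | (false, false) => -1

theorem isShort_midExp (c : Bool × Bool) : IsShort (midExp c) := by
  unfold IsShort; revert c; decide

theorem abs_trailExp_add_leadExp_le (c c' : Bool × Bool) : |trailExp c + leadExp c'| ≤ 2 := by
  revert c c'; decide

theorem isShort_midExp_add_midExp {c c' : Bool × Bool} (hcc' : c.1 = c'.1 → c.2 = c'.2)
    (hmerge : trailExp c + leadExp c' = 0) : IsShort (midExp c + midExp c') := by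
  unfold IsShort; revert c c'; decide

theorem trailExp_add_leadExp_ne_zero {c c' c'' : Bool × Bool} (hcc' : c.1 = c'.1 → c.2 = c'.2)
    (hc'c'' : c'.1 = c''.1 → c'.2 = c''.2) (hmerge : trailExp c + leadExp c' = 0) :
    trailExp c' + leadExp c'' ≠ 0 := by
  revert c c' c''; decide

variable {G : Type*} [Group G] (a h : G)

def gen (b : Bool) : G := if b then h * a * h⁻¹ * a else a * h * a * h⁻¹

def letter (c : Bool × Bool) : G := a ^ leadExp c * (h * a ^ midExp c * h⁻¹) * a ^ trailExp c

theorem lift_gen_mk (l : List (Bool × Bool)) :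
    FreeGroup.lift (gen a h) (FreeGroup.mk l) = (l.map (letter a h)).prod := by
  rw [FreeGroup.lift_mk]
  congr 1
  refine List.map_congr_left fun c _ => ?_
  rcases c with ⟨_ | _, _ | _⟩ <;> simp [gen, letter, leadExp, midExp, trailExp] <;> group

def blockProd (bs : List (ℤ × ℤ)) : G := (bs.map fun p => h * a ^ p.1 * h⁻¹ * a ^ p.2).prod

inductive ShortBlocks : List (ℤ × ℤ) → Prop
  | single {s : ℤ} (e : ℤ) : IsShort s → ShortBlocks [(s, e)]
  | cons {s e : ℤ} {bs : List (ℤ × ℤ)} : IsShort s → IsShort e → ShortBlocks bs →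
      ShortBlocks ((s, e) :: bs)

theorem ShortBlocks.replace_head {s s' e : ℤ} {bs : List (ℤ × ℤ)}
    (hbs : ShortBlocks ((s, e) :: bs)) (hs' : IsShort s') : ShortBlocks ((s', e) :: bs) := by
  cases hbs with
  | single => exact .single e hs'
  | cons _ he hbs => exact .cons hs' he hbs

/-- The last disjunct allows the first block to be the merge of the first two letters; then the
third letter cannot merge into it as well. -/
theorem exists_shortBlocks_of_isReduced : ∀ (c : Bool × Bool) (l : List (Bool × Bool)),
    FreeGroup.IsReduced (c :: l) → ∃ s e bs, ShortBlocks ((s, e) :: bs) ∧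
      ((c :: l).map (letter a h)).prod = a ^ leadExp c * blockProd a h ((s, e) :: bs) ∧
      (s = midExp c ∨ ∃ c' ∈ l.head?, trailExp c + leadExp c' = 0)
  | c, [], _ => ⟨midExp c, trailExp c, [], .single _ (isShort_midExp c),
      by simp [letter, blockProd, mul_assoc], .inl rfl⟩
  | c, c' :: l, hl => by
    obtain ⟨hcc', hl'⟩ := FreeGroup.isReduced_cons_cons.1 hl
    obtain ⟨s, e, bs, hbs, hprod, hs⟩ := exists_shortBlocks_of_isReduced c' l hl'
    rw [List.map_cons, List.prod_cons, hprod]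
    by_cases hmerge : trailExp c + leadExp c' = 0
    · have hs : s = midExp c' := hs.resolve_right fun ⟨c'', hc'', h0⟩ => by
        obtain ⟨l', rfl⟩ : ∃ l', l = c'' :: l' := by cases l <;> simp_all
        exact trailExp_add_leadExp_ne_zero hcc' (FreeGroup.isReduced_cons_cons.1 hl').1 hmerge h0
      refine ⟨midExp c + midExp c', e, bs,
        hbs.replace_head (isShort_midExp_add_midExp hcc' hmerge), ?_, .inr ⟨c', rfl, hmerge⟩⟩
      have hlead : leadExp c' = -trailExp c := by omega
      simp only [letter, blockProd, List.map_cons, List.prod_cons, hs, hlead, zpow_add, zpow_neg]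
      group
    · refine ⟨midExp c, trailExp c + leadExp c', (s, e) :: bs,
        .cons (isShort_midExp c) ⟨hmerge, abs_trailExp_add_leadExp_le c c'⟩ hbs, ?_, .inl rfl⟩
      simp only [letter, blockProd, List.map_cons, List.prod_cons, zpow_add]
      group

theorem exists_shortBlocks {z : FreeGroup Bool} (hz : z ≠ 1) :
    ∃ (e₀ : ℤ) (bs : List (ℤ × ℤ)), ShortBlocks bs ∧
      FreeGroup.lift (gen a h) z = a ^ e₀ * blockProd a h bs := by
  obtain ⟨c, l, hcl⟩ := List.exists_cons_of_ne_nil (mt FreeGroup.toWord_eq_nil_iff.1 hz)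
  obtain ⟨s, e, bs, hbs, hprod, -⟩ :=
    exists_shortBlocks_of_isReduced a h c l (hcl ▸ FreeGroup.isReduced_toWord)
  refine ⟨leadExp c, _, hbs, ?_⟩
  rw [← FreeGroup.mk_toWord (x := z), lift_gen_mk, hcl, hprod]

end ConjugatePair

open ConjugatePair

namespace HNNExtension

open NormalWord

variable {G : Type*} [Group G] {A B : Subgroup G} (φ : A ≃* B)

variable (A B) in
def IsReducedList (l : List (ℤˣ × G)) : Prop :=
  l.IsChain fun p q => p.2 ∈ toSubgroup A B p.1 → p.1 = q.1

def listProd (l : List (ℤˣ × G)) : HNNExtension G A B φ :=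
  (l.map fun p => t ^ (p.1 : ℤ) * of p.2).prod

@[simp]
theorem listProd_nil : listProd φ ([] : List (ℤˣ × G)) = 1 := rfl

@[simp]
theorem listProd_cons (p : ℤˣ × G) (l : List (ℤˣ × G)) :
    listProd φ (p :: l) = t ^ (p.1 : ℤ) * of p.2 * listProd φ l := by
  simp [listProd]

@[simp]
theorem listProd_append (l₁ l₂ : List (ℤˣ × G)) :
    listProd φ (l₁ ++ l₂) = listProd φ l₁ * listProd φ l₂ := by
  simp [listProd]

theorem IsReducedList.replace_last {L : List (ℤˣ × G)} {u : ℤˣ} {g : G}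
    (hL : IsReducedList A B (L ++ [(u, g)])) (g' : G) : IsReducedList A B (L ++ [(u, g')]) := by
  obtain ⟨hL, -, hjoin⟩ := List.isChain_append.1 hL
  refine hL.append (List.isChain_singleton _) fun x hx y hy hmem => ?_
  obtain rfl : (u, g') = y := by simpa using hy
  exact hjoin x hx (u, g) rfl hmem

def invList : G → List (ℤˣ × G) → List (ℤˣ × G)
  | _, [] => []
  | c, (u, g) :: l => invList g⁻¹ l ++ [(-u, c)]

theorem listProd_invList (u : ℤˣ) (g : G) :
    ∀ (c : G) (L : List (ℤˣ × G)),
      listProd φ (invList c (L ++ [(u, g)])) = of g * (listProd φ (L ++ [(u, g)]))⁻¹ * of c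
  | c, [] => by simp [invList, zpow_neg]
  | c, (u', g') :: L => by
    rw [List.cons_append, invList, listProd_append, listProd_invList u g g'⁻¹ L]
    simp [mul_assoc, zpow_neg]

theorem IsReducedList.invList : ∀ (c : G) {l : List (ℤˣ × G)}, IsReducedList A B l →
    IsReducedList A B (invList c l)
  | _, [], _ => List.isChain_nil
  | _, [_], _ => List.isChain_singleton _
  | c, (u, g) :: (u₂, g₂) :: l, hl => by
    obtain ⟨hstep, hl'⟩ := List.isChain_cons_cons.1 hl
    have ih := IsReducedList.invList g⁻¹ hl'
    rw [HNNExtension.invList] at ih ⊢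
    refine ih.append (List.isChain_singleton _) fun x hx y hy hmem => ?_
    simp only [List.getLast?_append, List.getLast?_singleton, Option.some_or,
      Option.mem_def, Option.some_inj, List.head?_cons] at hx hy
    subst hx hy
    rcases Int.units_eq_one_or u₂ with rfl | rfl <;>
      rcases Int.units_eq_one_or u with rfl | rfl <;>
      simp_all [inv_mem_iff]

section Blocks

variable (α : G) (L : List (ℤˣ × G)) (u : ℤˣ)

def blockList (s e : ℤ) : List (ℤˣ × G) :=
  L ++ [(u, α ^ s)] ++ invList (α ^ e) (L ++ [(u, 1)])

theorem listProd_blockList (s e : ℤ) :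
    listProd φ (blockList α L u s e) = listProd φ (L ++ [(u, 1)]) * of α ^ s *
      (listProd φ (L ++ [(u, 1)]))⁻¹ * of α ^ e := by
  rw [blockList, listProd_append, listProd_invList]
  simp [mul_assoc]

theorem getLast?_blockList (s e : ℤ) : ∀ p ∈ (blockList α L u s e).getLast?, p.2 = α ^ e := by
  obtain ⟨p, l, hpl⟩ := List.exists_cons_of_ne_nil (List.concat_ne_nil (u, (1 : G)) L)
  rw [blockList, hpl, invList, List.getLast?_append_of_ne_nil _ (by simp)]
  simp

variable {α L u}

theorem IsReducedList.blockList (hL : IsReducedList A B (L ++ [(u, 1)])) {s : ℤ}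
    (hs : α ^ s ∉ toSubgroup A B u) (e : ℤ) : IsReducedList A B (blockList α L u s e) :=
  (hL.replace_last _).append (hL.invList _) fun x hx _ _ hmem => by
    obtain rfl : (u, α ^ s) = x := by simpa using hx
    exact absurd hmem hs

theorem exists_isReducedList_listProd_eq_blockProd
    (hα : ∀ s, IsShort s → ∀ u, α ^ s ∉ toSubgroup A B u)
    (hL : IsReducedList A B (L ++ [(u, 1)])) {bs : List (ℤ × ℤ)} (hbs : ShortBlocks bs) :
    ∃ l ≠ [], IsReducedList A B l ∧
      listProd φ l = blockProd (of α) (listProd φ (L ++ [(u, 1)])) bs := by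
  induction hbs with
  | single e hs =>
    refine ⟨blockList α L u _ e, by simp [blockList], hL.blockList (hα _ hs u) e, ?_⟩
    simp [blockProd, listProd_blockList]
  | @cons s e _ hs he _ ih =>
    obtain ⟨l, hl0, hl, hprod⟩ := ih
    refine ⟨blockList α L u s e ++ l, by simp [blockList], ?_, ?_⟩
    · refine (hL.blockList (hα s hs u) e).append hl fun x hx _ _ hmem => ?_
      rw [getLast?_blockList α L u s e x hx] at hmem
      exact absurd hmem (hα e he x.1)
    · simp [blockProd, listProd_blockList, hprod, mul_assoc]

theorem freelyGenerateF2_of_isReducedList (hα : ∀ s, IsShort s → ∀ u, α ^ s ∉ toSubgroup A B u)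
    (hL : IsReducedList A B (L ++ [(u, 1)])) :
    let h := listProd φ (L ++ [(u, 1)])
    FreelyGenerateF2 (h * of α * h⁻¹ * of α) (of α * h * of α * h⁻¹) := by
  intro h
  show Function.Injective (FreeGroup.lift (gen (of α) h))
  refine (injective_iff_map_eq_one _).2 fun z hz => by_contra fun hz1 => ?_
  obtain ⟨e₀, bs, hbs, hzbs⟩ := exists_shortBlocks (of α) h hz1
  obtain ⟨l, hl0, hl, hprod⟩ := exists_isReducedList_listProd_eq_blockProd φ hα hL hbs
  have hprod : listProd φ l = blockProd (of α) h bs := hprod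
  have hw : (⟨α ^ e₀, l, hl⟩ : ReducedWord G A B).prod φ = 1 :=
    calc _ = of (α ^ e₀) * listProd φ l := rfl
      _ = 1 := by rw [map_zpow, hprod, ← hzbs, hz]
  exact hl0 (ReducedWord.toList_eq_nil_of_mem_of_range φ _ (hw ▸ one_mem _))

end Blocks

theorem exists_of_mul_mul_of_eq_listProd {x : HNNExtension G A B φ} (hx : x ∉ of.range) :
    ∃ (g₁ g₂ : G) (L : List (ℤˣ × G)) (u : ℤˣ), IsReducedList A B (L ++ [(u, 1)]) ∧
      of g₁ * x * of g₂ = listProd φ (L ++ [(u, 1)]) := by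
  obtain ⟨d⟩ := TransversalPair.nonempty G A B
  set w := (NormalWord.equiv φ d x).toReducedWord
  have hwx : w.prod φ = x := (NormalWord.equiv φ d).symm_apply_apply x
  obtain hnil | ⟨L, ⟨u, g⟩, hLg⟩ := List.eq_nil_or_concat w.toList
  · exact absurd ⟨w.head, by rw [← hwx, ReducedWord.prod, hnil]; simp⟩ hx
  rw [List.concat_eq_append] at hLg
  refine ⟨w.head⁻¹, g⁻¹, L, u, (hLg ▸ w.chain : IsReducedList A B _).replace_last 1, ?_⟩
  rw [← hwx, ReducedWord.prod, hLg]
  simp [listProd, mul_assoc]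

end HNNExtension

theorem Multiplicative.ofAdd_one_zpow (k : ℤ) : ofAdd (1 : ℤ) ^ k = ofAdd k := by
  rw [← ofAdd_zsmul, smul_eq_mul, mul_one]

namespace BS

open Multiplicative HNNExtension ConjugatePair

theorem t_mul_a_zpow_mul_inv_t (m n k : ℤ) :
    t m n * a m n ^ (m * k) * (t m n)⁻¹ = a m n ^ (n * k) := by
  have hrel := PresentedGroup.one_of_mem (Set.mem_singleton _ : _ ∈ bsRels m n)
  rw [map_mul, map_mul, map_mul, map_inv, map_inv, map_zpow, map_zpow] at hrel
  rw [zpow_mul, zpow_mul, ← conj_zpow]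
  exact congrArg (· ^ k) (mul_inv_eq_one.1 hrel)

def scale (k : ℤ) : Multiplicative ℤ →* Multiplicative ℤ :=
  (AddMonoidHom.mulLeft k).toMultiplicative

theorem scale_apply (k : ℤ) (x : Multiplicative ℤ) : scale k x = ofAdd (k * toAdd x) := rfl

theorem scale_injective {k : ℤ} (hk : k ≠ 0) : Function.Injective (scale k) :=
  fun _ _ hxy => toAdd.injective (mul_left_cancel₀ hk (congrArg toAdd hxy))

theorem ofAdd_notMem_range_scale {k s : ℤ} (hk : 3 ≤ |k|) (hs : IsShort s) :
    ofAdd s ∉ (scale k).range := fun ⟨x, hx⟩ =>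
  hs.1 (Int.eq_zero_of_abs_lt_dvd ((abs_dvd k s).2 ⟨toAdd x, congrArg toAdd hx.symm⟩)
    (by linarith [hs.2]))

theorem ofAdd_one_zpow_notMem_toSubgroup {m n s : ℤ} (hm : 3 ≤ |m|) (hn : 3 ≤ |n|)
    (hs : IsShort s) (u : ℤˣ) :
    ofAdd (1 : ℤ) ^ s ∉ toSubgroup (scale m).range (scale n).range u := by
  rw [ofAdd_one_zpow]
  rcases Int.units_eq_one_or u with rfl | rfl
  exacts [ofAdd_notMem_range_scale hm hs, ofAdd_notMem_range_scale hn hs]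

variable {m n : ℤ} (hm : m ≠ 0) (hn : n ≠ 0)

noncomputable def scaleEquiv : (scale m).range ≃* (scale n).range :=
  (MonoidHom.ofInjective (scale_injective hm)).symm.trans
    (MonoidHom.ofInjective (scale_injective hn))

theorem scaleEquiv_ofInjective (x : Multiplicative ℤ) :
    (scaleEquiv hm hn (MonoidHom.ofInjective (scale_injective hm) x) : Multiplicative ℤ) =
      scale n x := by
  simp [scaleEquiv, MonoidHom.ofInjective_apply]

abbrev AsHNN : Type :=
  HNNExtension (Multiplicative ℤ) (scale m).range (scale n).range (scaleEquiv hm hn)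

theorem of_ofAdd_one_zpow (k : ℤ) : (of (ofAdd 1) : AsHNN hm hn) ^ k = of (ofAdd k) := by
  rw [← map_zpow, ofAdd_one_zpow]

noncomputable def toHNN : BS m n →* AsHNN hm hn :=
  PresentedGroup.toGroup (f := fun b => if b then HNNExtension.t else of (ofAdd 1)) <| by
    rintro _ rfl
    have hconj := equiv_eq_conj (φ := scaleEquiv hm hn)
      (MonoidHom.ofInjective (scale_injective hm) (ofAdd 1))
    rw [scaleEquiv_ofInjective, MonoidHom.ofInjective_apply, scale_apply, scale_apply, toAdd_ofAdd,
      mul_one, mul_one] at hconj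
    simp only [FreeGroup.lift_apply_of, map_mul, map_inv, map_zpow, if_true, Bool.false_eq_true,
      if_false, of_ofAdd_one_zpow]
    rw [← hconj, mul_inv_cancel]

theorem toHNN_a : toHNN hm hn (a m n) = of (ofAdd 1) := rfl

theorem toHNN_a_zpow (k : ℤ) : toHNN hm hn (a m n ^ k) = of (ofAdd k) := by
  rw [map_zpow, toHNN_a, of_ofAdd_one_zpow]

noncomputable def ofHNN : AsHNN hm hn →* BS m n :=
  HNNExtension.lift (zpowersHom _ (a m n)) (t m n) fun x => by
    obtain ⟨k, rfl⟩ := (MonoidHom.ofInjective (scale_injective hm)).surjective x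
    rw [scaleEquiv_ofInjective, MonoidHom.ofInjective_apply, zpowersHom_apply, zpowersHom_apply,
      scale_apply, scale_apply, toAdd_ofAdd, toAdd_ofAdd, ← t_mul_a_zpow_mul_inv_t,
      inv_mul_cancel_right]

theorem ofHNN_toHNN (g : BS m n) : ofHNN hm hn (toHNN hm hn g) = g := by
  suffices (ofHNN hm hn).comp (toHNN hm hn) = MonoidHom.id _ from DFunLike.congr_fun this g
  ext (_ | _) <;> simp [ofHNN, toHNN, a, t]

theorem toHNN_notMem_range {g : BS m n} (hg : g ∉ Subgroup.zpowers (a m n)) :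
    toHNN hm hn g ∉ (of : Multiplicative ℤ →* AsHNN hm hn).range := fun ⟨x, hx⟩ =>
  hg ⟨toAdd x, by rw [← ofHNN_toHNN hm hn g, ← hx, ofHNN, lift_of, zpowersHom_apply]⟩

theorem exists_toHNN_eq_listProd {g : BS m n} (hg : g ∉ Subgroup.zpowers (a m n)) :
    ∃ (i j : ℤ) (L : List (ℤˣ × Multiplicative ℤ)) (u : ℤˣ),
      IsReducedList (scale m).range (scale n).range (L ++ [(u, 1)]) ∧
      toHNN hm hn (a m n ^ i * g * a m n ^ j) = listProd _ (L ++ [(u, 1)]) := by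
  obtain ⟨g₁, g₂, L, u, hL, hconj⟩ :=
    exists_of_mul_mul_of_eq_listProd _ (toHNN_notMem_range hm hn hg)
  exact ⟨toAdd g₁, toAdd g₂, L, u, hL, by rwa [map_mul, map_mul, toHNN_a_zpow, toHNN_a_zpow]⟩

end BS

theorem free_subgroup_from_conjugates (m n : ℤ) (hm : 3 ≤ |m|) (hn : 3 ≤ |n|)
    (g : BS m n) (hg : g ∉ Subgroup.zpowers (BS.a m n)) :
    ∃ i j : ℤ, ∀ h : BS m n, h = BS.a m n ^ i * g * BS.a m n ^ j →
      FreelyGenerateF2 (h * BS.a m n * h⁻¹ * BS.a m n) (BS.a m n * h * BS.a m n * h⁻¹) := by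
  have hm0 : m ≠ 0 := by rintro rfl; simp at hm
  have hn0 : n ≠ 0 := by rintro rfl; simp at hn
  obtain ⟨i, j, L, u, hL, hh⟩ := BS.exists_toHNN_eq_listProd hm0 hn0 hg
  refine ⟨i, j, ?_⟩
  rintro h rfl
  refine FreelyGenerateF2.of_map (BS.toHNN hm0 hn0) ?_
  simpa only [map_mul, map_inv, hh, BS.toHNN_a] using
    HNNExtension.freelyGenerateF2_of_isReducedList (BS.scaleEquiv hm0 hn0)
      (fun s hs u => BS.ofAdd_one_zpow_notMem_toSubgroup hm hn hs u) hL
end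

section
/- Let K and L be countable torsion-free groups with K nontrivial, and let H be a subgroup of K which is maximal amenable in K. Then the image of H under the canonical inclusion of K into the free product K * L is a maximal amenable subgroup of K * L. -/
/-!
A maximal amenable subgroup `H` of a nontrivial group is nontrivial, because cyclic groups are
amenable (for `ℤ`, take an ultrafilter limit of Cesàro averages); in a torsion-free `K` it therefore
contains an element `h` of infinite order. Suppose an amenable `N ≤ K ∗ L` contains `H` and some
`x ∉ K`. Writing `x = k₀ W k₁` with `W` a reduced word that starts and ends outside `K`, ping-pong
on reduced words shows that `h` and `x h x⁻¹` generate a free group of rank two inside `N`. That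
group is paradoxical, hence not amenable. So `N ≤ K`, and maximality of `H` in `K` gives `N = H`.
-/

/-- A left-invariant mean on the bounded real-valued functions on `G` exists:
`G` is amenable. -/
def IsAmenable (G : Type*) [Group G] : Prop :=
  ∃ m : (G → ℝ) → ℝ,
    (∀ f₁ f₂ : G → ℝ, Bornology.IsBounded (Set.range f₁) → Bornology.IsBounded (Set.range f₂) →
      m (f₁ + f₂) = m f₁ + m f₂) ∧
    (∀ (c : ℝ) (f : G → ℝ), Bornology.IsBounded (Set.range f) → m (c • f) = c * m f) ∧
    (∀ f : G → ℝ, Bornology.IsBounded (Set.range f) → (∀ x, 0 ≤ f x) → 0 ≤ m f) ∧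
    m (fun _ => 1) = 1 ∧
    (∀ (g : G) (f : G → ℝ), Bornology.IsBounded (Set.range f) →
      m (fun x => f (g * x)) = m f)

/-- `H` is a maximal amenable subgroup of `G`. -/
def MaximalAmenable {G : Type*} [Group G] (H : Subgroup G) : Prop :=
  IsAmenable H ∧ ∀ K : Subgroup G, IsAmenable K → H ≤ K → K = H

/-- A monoid is torsion-free if no non-identity element has finite order (the definition of
`Monoid.IsTorsionFree` in older Mathlib, since removed). -/
def Monoid.IsTorsionFree (G : Type*) [Monoid G] : Prop :=
  ∀ g : G, g ≠ 1 → ¬IsOfFinOrder g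

open Function Filter Set Topology Pointwise

section Amenability

variable {G A : Type*} [Group G] [Group A]

theorem IsAmenable.of_equivariant (p : A → G) (hp : ∀ g : G, ∃ a : A, ∀ x, p (a * x) = g * p x)
    (hA : IsAmenable A) : IsAmenable G := by
  obtain ⟨m, hadd, hsmul, hpos, hone, hinv⟩ := hA
  have hbdd {f : G → ℝ} (hf : Bornology.IsBounded (range f)) :
      Bornology.IsBounded (range (f ∘ p)) :=
    hf.subset (range_comp_subset_range p f)
  refine ⟨fun f => m (f ∘ p), fun f₁ f₂ h₁ h₂ => hadd _ _ (hbdd h₁) (hbdd h₂),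
    fun c f hf => hsmul c _ (hbdd hf), fun f hf hf0 => hpos _ (hbdd hf) fun x => hf0 _, hone,
    fun g f hf => ?_⟩
  obtain ⟨a, ha⟩ := hp g
  simpa only [comp_def, ha] using hinv a (f ∘ p) (hbdd hf)

theorem IsAmenable.of_surjective (π : A →* G) (hπ : Surjective π) (hA : IsAmenable A) :
    IsAmenable G :=
  hA.of_equivariant π fun g => (hπ g).imp fun a ha x => by rw [map_mul, ha]

theorem MonoidHom.exists_map_mul_eq_mul (φ : G →* A) (hφ : Injective φ) :
    ∃ r : A → G, ∀ g a, r (φ g * a) = g * r a := by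
  let s := QuotientGroup.rightRel φ.range
  have hrep (a : A) : ∃ g, φ g = a * (Quotient.mk s a).out⁻¹ :=
    QuotientGroup.rightRel_apply.mp (Quotient.mk_out (s := s) a)
  -- `r a` is the `φ`-coordinate of `a` relative to the chosen representative of its coset
  choose r hr using hrep
  refine ⟨r, fun g a => hφ ?_⟩
  have hcoset : Quotient.mk s (φ g * a) = Quotient.mk s a :=
    Quotient.sound (QuotientGroup.rightRel_apply.mpr ⟨g⁻¹, by simp⟩)
  rw [hr, hcoset, map_mul, hr, mul_assoc]

theorem IsAmenable.of_injective (φ : G →* A) (hφ : Injective φ) (hA : IsAmenable A) :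
    IsAmenable G := by
  obtain ⟨r, hr⟩ := φ.exists_map_mul_eq_mul hφ
  exact hA.of_equivariant r fun g => ⟨φ g, hr g⟩

end Amenability

section IntMean

variable {f : Multiplicative ℤ → ℝ} {C : ℝ}

noncomputable def cesaroAverage (f : Multiplicative ℤ → ℝ) (n : ℕ) : ℝ :=
  (∑ k ∈ Finset.range n, f (.ofAdd k)) / n

theorem abs_cesaroAverage_le (hC : ∀ x, |f x| ≤ C) (n : ℕ) : |cesaroAverage f n| ≤ C := by
  rcases Nat.eq_zero_or_pos n with rfl | hn
  · simpa [cesaroAverage] using (abs_nonneg _).trans (hC 1)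
  rw [cesaroAverage, abs_div, Nat.abs_cast, div_le_iff₀ (by positivity)]
  calc |∑ k ∈ Finset.range n, f (.ofAdd k)| ≤ ∑ k ∈ Finset.range n, |f (.ofAdd k)| :=
        Finset.abs_sum_le_sum_abs _ _
    _ ≤ ∑ _k ∈ Finset.range n, C := Finset.sum_le_sum fun k _ => hC _
    _ = C * n := by simp [mul_comm]

theorem cesaroAverage_shift_sub (f : Multiplicative ℤ → ℝ) (n : ℕ) :
    cesaroAverage (fun x => f (.ofAdd 1 * x)) n - cesaroAverage f n =
      (f (.ofAdd n) - f 1) / n := by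
  rw [cesaroAverage, cesaroAverage, ← sub_div, ← Finset.sum_sub_distrib]
  congr 1
  convert Finset.sum_range_sub (fun k : ℕ => f (.ofAdd k)) n using 2 with k <;>
    simp [← ofAdd_add, add_comm]

theorem tendsto_cesaroAverage_shift_sub (hC : ∀ x, |f x| ≤ C) :
    Tendsto (fun n => cesaroAverage (fun x => f (.ofAdd 1 * x)) n - cesaroAverage f n) atTop
      (𝓝 0) := by
  have hbound : Tendsto (fun n : ℕ => (C + C) / n) atTop (𝓝 0) :=
    tendsto_const_nhds.div_atTop tendsto_natCast_atTop_atTop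
  refine squeeze_zero_norm (fun n => ?_) hbound
  rw [cesaroAverage_shift_sub, Real.norm_eq_abs, abs_div, Nat.abs_cast]
  gcongr
  exact (abs_sub _ _).trans (add_le_add (hC _) (hC _))

noncomputable def intMean (f : Multiplicative ℤ → ℝ) : ℝ :=
  limUnder (Ultrafilter.of (atTop : Filter ℕ)) (cesaroAverage f)

theorem tendsto_cesaroAverage_intMean (hC : ∀ x, |f x| ≤ C) :
    Tendsto (cesaroAverage f) ↑(Ultrafilter.of (atTop : Filter ℕ)) (𝓝 (intMean f)) := by
  have hmem (n : ℕ) : cesaroAverage f n ∈ Icc (-C) C := abs_le.mp (abs_cesaroAverage_le hC n)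
  obtain ⟨l, -, hl⟩ := isCompact_Icc.ultrafilter_le_nhds
    ((Ultrafilter.of atTop).map (cesaroAverage f))
    (le_principal_iff.mpr (mem_map.mpr (univ_mem' hmem)))
  exact tendsto_nhds_limUnder ⟨l, hl⟩

theorem intMean_eq_of_tendsto {l : ℝ}
    (h : Tendsto (cesaroAverage f) ↑(Ultrafilter.of (atTop : Filter ℕ)) (𝓝 l)) :
    intMean f = l :=
  h.limUnder_eq

theorem intMean_shift_one (hC : ∀ x, |f x| ≤ C) :
    intMean (fun x => f (.ofAdd 1 * x)) = intMean f := by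
  apply intMean_eq_of_tendsto
  simpa using ((tendsto_cesaroAverage_shift_sub hC).mono_left (Ultrafilter.of_le _)).add
    (tendsto_cesaroAverage_intMean hC)

theorem intMean_shift (hC : ∀ x, |f x| ≤ C) (s : ℤ) :
    intMean (fun x => f (.ofAdd s * x)) = intMean f := by
  induction s using Int.induction_on generalizing f with
  | zero => simp
  | succ n ih =>
    rw [← ih hC, ← intMean_shift_one (f := fun x => f (.ofAdd (n : ℤ) * x)) fun _ => hC _]
    simp [← mul_assoc, ← ofAdd_add]
  | pred n ih =>
    rw [← ih hC, ← intMean_shift_one (f := fun x => f (.ofAdd (-n - 1 : ℤ) * x)) fun _ => hC _]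
    simp [← mul_assoc]

end IntMean

theorem isAmenable_multiplicative_int : IsAmenable (Multiplicative ℤ) := by
  have hbdd {f : Multiplicative ℤ → ℝ} (hf : Bornology.IsBounded (range f)) :
      ∃ C, ∀ x, |f x| ≤ C := by
    simpa [isBounded_iff_forall_norm_le] using hf
  refine ⟨intMean, fun f₁ f₂ h₁ h₂ => ?_, fun c f hf => ?_, fun f hf hf0 => ?_, ?_,
    fun g f hf => ?_⟩
  · obtain ⟨C₁, hC₁⟩ := hbdd h₁
    obtain ⟨C₂, hC₂⟩ := hbdd h₂
    refine intMean_eq_of_tendsto ?_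
    convert (tendsto_cesaroAverage_intMean hC₁).add (tendsto_cesaroAverage_intMean hC₂) using 1
    ext n
    simp [cesaroAverage, Finset.sum_add_distrib, add_div]
  · obtain ⟨C, hC⟩ := hbdd hf
    refine intMean_eq_of_tendsto ?_
    convert (tendsto_cesaroAverage_intMean hC).const_mul c using 1
    ext n
    simp only [cesaroAverage, Pi.smul_apply, smul_eq_mul, ← Finset.mul_sum, mul_div_assoc]
  · obtain ⟨C, hC⟩ := hbdd hf
    refine ge_of_tendsto' (tendsto_cesaroAverage_intMean hC) fun n => ?_
    exact div_nonneg (Finset.sum_nonneg fun k _ => hf0 _) n.cast_nonneg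
  · refine intMean_eq_of_tendsto (tendsto_const_nhds.congr' ?_ |>.mono_left (Ultrafilter.of_le _))
    filter_upwards [eventually_ne_atTop 0] with n hn
    simp [cesaroAverage, hn]
  · obtain ⟨C, hC⟩ := hbdd hf
    exact intMean_shift hC g.toAdd

theorem isAmenable_zpowers {G : Type*} [Group G] (g : G) : IsAmenable (Subgroup.zpowers g) :=
  isAmenable_multiplicative_int.of_surjective (zpowersHom G g).rangeRestrict
    (zpowersHom G g).rangeRestrict_surjective

theorem MaximalAmenable.ne_bot {G : Type*} [Group G] [Nontrivial G] {H : Subgroup G}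
    (hH : MaximalAmenable H) : H ≠ ⊥ := by
  rintro rfl
  obtain ⟨g, hg⟩ := exists_ne (1 : G)
  exact hg (Subgroup.zpowers_eq_bot.mp (hH.2 _ (isAmenable_zpowers g) bot_le))

theorem MaximalAmenable.map_of_injective {G G' : Type*} [Group G] [Group G'] (f : G →* G')
    (hf : Injective f) {H : Subgroup G} (hH : MaximalAmenable H)
    (hrange : ∀ N : Subgroup G', IsAmenable N → H.map f ≤ N → N ≤ f.range) :
    MaximalAmenable (H.map f) := by
  refine ⟨hH.1.of_injective (H.equivMapOfInjective f hf).symm.toMonoidHom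
    (H.equivMapOfInjective f hf).symm.injective, fun N hN hHN => ?_⟩
  have hcomap : N.comap f = H :=
    hH.2 _ (hN.of_injective (f.subgroupComap N) fun a b hab => Subtype.ext (hf congr($hab.1)))
      (Subgroup.map_le_iff_le_comap.mp hHN)
  rw [← hcomap, Subgroup.map_comap_eq_self (hrange N hN hHN)]

section Paradox

variable {G : Type*} [Group G]

theorem IsAmenable.exists_invariant_measure (hG : IsAmenable G) :
    ∃ μ : Set G → ℝ, μ ∅ = 0 ∧ μ univ = 1 ∧ (∀ S, 0 ≤ μ S) ∧
      (∀ S T, μ (S ∪ T) + μ (S ∩ T) = μ S + μ T) ∧ ∀ (g : G) S, μ (g • S) = μ S := by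
  obtain ⟨m, hadd, hsmul, hpos, hone, hinv⟩ := hG
  have hbdd (S : Set G) : Bornology.IsBounded (range (S.indicator (1 : G → ℝ))) :=
    (toFinite ({0, 1} : Set ℝ)).isBounded.subset <| range_subset_iff.2 fun x => by
      by_cases hx : x ∈ S <;> simp [hx]
  refine ⟨fun S => m (S.indicator 1), ?_, ?_, fun S => hpos _ (hbdd S) fun x => ?_, fun S T => ?_,
    fun g S => ?_⟩
  · simpa [Pi.zero_def] using hsmul 0 _ (hbdd ∅)
  · simpa [Pi.one_def] using hone
  · exact indicator_nonneg (fun _ _ => zero_le_one) x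
  · rw [← hadd _ _ (hbdd _) (hbdd _), ← hadd _ _ (hbdd _) (hbdd _),
      indicator_union_add_inter]
  · have htranslate : (g • S).indicator (1 : G → ℝ) = fun x => S.indicator 1 (g⁻¹ * x) := by
      ext x
      by_cases hx : g⁻¹ * x ∈ S <;> simp [mem_smul_set_iff_inv_smul_mem, hx]
    simpa only [htranslate] using hinv g⁻¹ _ (hbdd S)

theorem not_isAmenable_of_paradoxical (P N : Bool → Set G) (s : Bool → G)
    (hPN : ∀ b, Disjoint (P b) (N b)) (hdisj : Disjoint (P true ∪ N true) (P false ∪ N false))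
    (hcover : ∀ b, P b ∪ s b • N b = univ) : ¬IsAmenable G := by
  intro hG
  obtain ⟨μ, hμ0, hμ1, hnonneg, hmod, hinv⟩ := hG.exists_invariant_measure
  have hunion {S T : Set G} (h : Disjoint S T) : μ (S ∪ T) = μ S + μ T := by
    simpa [h.inter_eq, hμ0] using hmod S T
  have hle_one (S : Set G) : μ S ≤ 1 := by
    have := hmod S Sᶜ
    rw [union_compl_self, inter_compl_self, hμ0, hμ1] at this
    linarith [hnonneg Sᶜ]
  have hpiece (b : Bool) : 1 ≤ μ (P b ∪ N b) := by
    have := hmod (P b) (s b • N b)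
    rw [hcover, hμ1, hinv] at this
    linarith [hnonneg (P b ∩ s b • N b), hunion (hPN b)]
  linarith [hle_one ((P true ∪ N true) ∪ (P false ∪ N false)), hunion hdisj, hpiece true,
    hpiece false]

end Paradox

namespace Monoid.CoprodI

open Word

section Words

variable {ι : Type*} {M : ι → Type*} [∀ i, Monoid (M i)] [DecidableEq ι] [∀ i, DecidableEq (M i)]

theorem Word.equiv_mul (a g : CoprodI M) : equiv (a * g) = a • equiv g :=
  mul_smul a g (Word.empty : Word M)

theorem Word.fstIdx_of_smul {i : ι} {m : M i} (hm : m ≠ 1) {w : Word M}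
    (hw : w.fstIdx ≠ some i) : (of m • w).fstIdx = some i := by
  rw [← cons_eq_smul (h1 := hw) (h2 := hm), fstIdx_cons]

end Words

/-- Zero when the reduced word of `g` does not start in the `b`-th factor. -/
def headExp (b : Bool) (g : CoprodI fun _ : Bool => Multiplicative ℤ) : ℤ :=
  (equivPair b (equiv g)).head.toAdd

theorem headExp_of_mul (b : Bool) (n : Multiplicative ℤ)
    (g : CoprodI fun _ : Bool => Multiplicative ℤ) :
    headExp b (of (i := b) n * g) = n.toAdd + headExp b g := by
  rw [headExp, headExp, equiv_mul, equivPair_smul_same, toAdd_mul]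

theorem fstIdx_equiv_of_headExp_ne_zero {b : Bool}
    {g : CoprodI fun _ : Bool => Multiplicative ℤ} (hg : headExp b g ≠ 0) :
    (equiv g).fstIdx = some b := by
  by_contra h
  exact hg (by rw [headExp, equivPair_eq_of_fstIdx_ne h, toAdd_one])

/-- Paradoxical decomposition by the sign of the leading exponent in either factor. -/
theorem not_isAmenable_coprodI_int : ¬IsAmenable (CoprodI fun _ : Bool => Multiplicative ℤ) := by
  refine not_isAmenable_of_paradoxical (fun b => {g | 0 < headExp b g})
    (fun b => {g | headExp b g < 0}) (fun b => of (i := b) (.ofAdd 1))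
    (fun b => disjoint_left.2 fun ⦃g⦄ (hP : 0 < headExp b g) => lt_asymm hP) ?_ fun b => ?_
  · refine disjoint_left.2 fun g hg₁ hg₂ => ?_
    simp only [mem_union, mem_ofPred_eq] at hg₁ hg₂
    have h₁ := fstIdx_equiv_of_headExp_ne_zero (b := true) (g := g) (by omega)
    have h₂ := fstIdx_equiv_of_headExp_ne_zero (b := false) (g := g) (by omega)
    simp [h₁] at h₂
  · refine eq_univ_of_forall fun g => or_iff_not_imp_left.2 fun hg => ?_
    rw [mem_smul_set_iff_inv_smul_mem, smul_eq_mul, ← map_inv, mem_ofPred_eq, headExp_of_mul]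
    simp only [mem_ofPred_eq, not_lt] at hg
    simp only [toAdd_inv, toAdd_ofAdd]
    omega

variable {ι : Type*} {G : ι → Type*} [∀ i, Group (G i)]

theorem NeWord.fstIdx_toWord {i j : ι} (W : NeWord G i j) : W.toWord.fstIdx = some i := by
  simp [Word.fstIdx, NeWord.toWord, W.toList_head?]

theorem NeWord.fstIdx_prod_smul [DecidableEq ι] [∀ i, DecidableEq (G i)] {i j k : ι}
    (W : NeWord G i j) (hjk : j ≠ k) {w : Word G} (hw : w.fstIdx = some k) :
    (W.prod • w).fstIdx = some i := by
  have hpp : Pairwise fun i j => ∀ m : G i, m ≠ 1 →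
      (of m : CoprodI G) • {w : Word G | w.fstIdx = some j} ⊆ {w | w.fstIdx = some i} := by
    rintro i j hij m hm _ ⟨v, (hv : v.fstIdx = some j), rfl⟩
    exact fstIdx_of_smul hm (by simpa [hv] using hij.symm)
  simpa [lift_of'] using lift_word_ping_pong (fun i => of) _ hpp W hjk ⟨w, hw, rfl⟩

theorem NeWord.prod_eq_mul_of_or {i : ι} : ∀ {a l : ι} (W : NeWord G a l),
    (∃ j, j ≠ i ∧ ∃ (W' : NeWord G a j) (k : G i), W.prod = W'.prod * of k) ∨
      (a = i ∧ ∃ k : G i, W.prod = of k)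
  | _, _, .singleton (i := c) x hx => by
    by_cases hc : c = i
    · subst hc
      exact .inr ⟨rfl, x, NeWord.prod_singleton x hx⟩
    · exact .inl ⟨c, hc, .singleton x hx, 1, by simp⟩
  | _, _, .append w₁ hne w₂ => by
    rcases NeWord.prod_eq_mul_of_or (i := i) w₂ with ⟨j, hj, W', k, h⟩ | ⟨rfl, k, h⟩
    · exact .inl ⟨j, hj, w₁.append hne W', k, by simp [NeWord.append_prod, h, mul_assoc]⟩
    · exact .inl ⟨_, hne, w₁, k, by rw [NeWord.append_prod, h]⟩

theorem exists_eq_of_mul_prod_mul_of {i : ι} {x : CoprodI G}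
    (hx : x ∉ (of : G i →* CoprodI G).range) :
    ∃ (k₀ k₁ : G i) (j j' : ι) (W : NeWord G j j'), j ≠ i ∧ j' ≠ i ∧
      x = of k₀ * W.prod * of k₁ := by
  classical
  set p := equivPair i (equiv x)
  have hx_eq : x = of p.head * p.tail.prod := by
    rw [← prod_rcons, ← equivPair_symm, Equiv.symm_apply_apply]
    exact (equiv.symm_apply_apply x).symm
  have htail : p.tail ≠ Word.empty := fun h => hx ⟨p.head, by simp [hx_eq, h]⟩
  obtain ⟨j, l, W, hW⟩ := NeWord.of_word p.tail htail
  have hj : j ≠ i := fun h => p.fstIdx_ne (by rw [← hW, W.fstIdx_toWord, h])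
  rcases W.prod_eq_mul_of_or (i := i) with ⟨j', hj', W', k₁, h⟩ | ⟨h, -⟩
  · exact ⟨p.head, k₁, j, j', W', hj, hj', by
      rw [hx_eq, ← hW, ← NeWord.prod, h, mul_assoc]⟩
  · exact absurd h hj

/-- Ping-pong on reduced words, with `x = k₀ W k₁` as in `exists_eq_of_mul_prod_mul_of`: after
conjugating by `k₀`, nontrivial powers of `h` move words starting where `W` starts into words
starting in `G i`, and nontrivial powers of `W k₁ h k₁⁻¹ W⁻¹` move them back. -/
theorem lift_zpowersHom_injective {i : ι} {h : G i} (hh : ¬IsOfFinOrder h) {x : CoprodI G}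
    (hx : x ∉ (of : G i →* CoprodI G).range) :
    Injective (lift fun b : Bool =>
      zpowersHom (CoprodI G) (bif b then of h else x * of h * x⁻¹)) := by
  classical
  obtain ⟨k₀, k₁, j, j', W, hj, hj', rfl⟩ := exists_eq_of_mul_prod_mul_of hx
  have hpow {n : Multiplicative ℤ} (hn : n ≠ 1) : h ^ n.toAdd ≠ 1 := by
    rw [← zpow_zero h]
    exact (injective_zpow_iff_not_isOfFinOrder.mpr hh).ne (by simpa using hn)
  have hh1 : h ≠ 1 := by
    rintro rfl
    exact hh IsOfFinOrder.one
  let S : Bool → Set (Word G) := fun b => {w | w.fstIdx = some (bif b then i else j)}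
  have hconj (y : CoprodI G) {b c : Bool} (hy : y • S c ⊆ S b) :
      (of k₀ * y * (of k₀)⁻¹) • (of k₀ • S c) ⊆ of k₀ • S b := by
    rw [smul_smul, inv_mul_cancel_right, ← smul_smul]
    exact smul_set_mono hy
  refine lift_injective_of_ping_pong _ (.inr ⟨true, ?_⟩) (fun b => of k₀ • S b) (fun b => ?_)
    (fun b c hbc => ?_) (fun b c hbc n hn => ?_)
  · exact (Cardinal.natCast_lt_aleph0 (n := 3)).le.trans (Cardinal.aleph0_le_mk _)
  · cases b
    · exact ⟨_, smul_mem_smul_set (a := of k₀) W.fstIdx_toWord⟩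
    · have hempty : (Word.empty : Word G).fstIdx ≠ some i := by simp [Word.empty, Word.fstIdx]
      exact ⟨_, smul_mem_smul_set (a := of k₀) (fstIdx_of_smul hh1 hempty)⟩
  · refine disjoint_smul_set.2 (disjoint_left.2 fun w (hb : _ = _) (hc : _ = _) => hbc ?_)
    cases b <;> cases c <;> simp_all [eq_comm]
  · have hconj_ne (k : G i) : k * h ^ n.toAdd * k⁻¹ ≠ 1 := by
      simpa [mul_inv_eq_one, mul_eq_left] using hpow hn
    cases b <;> cases c
    · exact absurd rfl hbc
    · let R : NeWord G j j := (W.append hj' (.singleton _ (hconj_ne k₁))).append hj'.symm W.inv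
      have hR : zpowersHom _ (of k₀ * W.prod * of k₁ * of h * (of k₀ * W.prod * of k₁)⁻¹) n =
          of k₀ * R.prod * (of k₀)⁻¹ := by
        simp only [R, zpowersHom_apply, conj_zpow, NeWord.append_prod, NeWord.prod_singleton,
          NeWord.inv_prod, map_mul, map_inv, map_zpow]
        group
      rw [cond_false, hR]
      refine hconj _ ?_
      rintro _ ⟨v, (hv : v.fstIdx = some i), rfl⟩
      exact R.fstIdx_prod_smul hj hv
    · have hh' : zpowersHom _ (of h) n = of k₀ * of (k₀⁻¹ * h ^ n.toAdd * k₀) * (of k₀)⁻¹ := by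
        simp only [zpowersHom_apply, map_mul, map_inv, map_zpow]
        group
      rw [cond_true, hh']
      refine hconj _ ?_
      rintro _ ⟨v, (hv : v.fstIdx = some j), rfl⟩
      exact fstIdx_of_smul (by simpa using hconj_ne k₀⁻¹) (by simpa [hv] using hj)
    · exact absurd rfl hbc

theorem le_range_of_of_isAmenable {N : Subgroup (CoprodI G)} (hN : IsAmenable N) {i : ι}
    {h : G i} (hh : ¬IsOfFinOrder h) (hhN : of h ∈ N) : N ≤ (of : G i →* CoprodI G).range := by
  intro x hxN
  by_contra hx
  let f := lift fun b : Bool => zpowersHom (CoprodI G) (bif b then of h else x * of h * x⁻¹)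
  have hfN (y) : f y ∈ N := lift_range_le _ _ (fun b => by
    cases b
    · exact Subgroup.zpowers_le.2 (N.mul_mem (N.mul_mem hxN hhN) (N.inv_mem hxN))
    · exact Subgroup.zpowers_le.2 hhN) ⟨y, rfl⟩
  exact not_isAmenable_coprodI_int <| hN.of_injective (f.codRestrict N hfN)
    fun a b hab => lift_zpowersHom_injective hh hx (congrArg Subtype.val hab)

end Monoid.CoprodI

namespace Monoid.Coprod

universe u v

variable (K : Type u) (L : Type v) [Group K] [Group L]

/-- `CoprodI` needs its factors in a single universe, hence the `ULift`s. -/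
abbrev boolFamily : Bool → Type max u v := fun b => cond b (ULift.{v} K) (ULift.{u} L)

instance : ∀ b, Group (boolFamily K L b)
  | true => ULift.group
  | false => ULift.group

def toCoprodI : Coprod K L →* CoprodI (boolFamily K L) :=
  lift ((CoprodI.of (i := true)).comp MulEquiv.ulift.symm.toMonoidHom)
    ((CoprodI.of (i := false)).comp MulEquiv.ulift.symm.toMonoidHom)

def ofCoprodIFactor : ∀ b, boolFamily K L b →* Coprod K L
  | true => inl.comp MulEquiv.ulift.toMonoidHom
  | false => inr.comp MulEquiv.ulift.toMonoidHom

def ofCoprodI : CoprodI (boolFamily K L) →* Coprod K L :=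
  CoprodI.lift (ofCoprodIFactor K L)

theorem ofCoprodI_toCoprodI (x : Coprod K L) : ofCoprodI K L (toCoprodI K L x) = x := by
  suffices (ofCoprodI K L).comp (toCoprodI K L) = .id _ from congr($this x)
  ext <;> simp [toCoprodI, ofCoprodI, ofCoprodIFactor]

variable {K L}

theorem le_range_inl_of_isAmenable {N : Subgroup (Coprod K L)} (hN : IsAmenable N) {h : K}
    (hh : ¬IsOfFinOrder h) (hhN : inl h ∈ N) : N ≤ (inl : K →* Coprod K L).range := by
  have hinj : Injective (toCoprodI K L) := LeftInverse.injective (ofCoprodI_toCoprodI K L)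
  have hle := CoprodI.le_range_of_of_isAmenable
    (hN.of_injective (N.equivMapOfInjective _ hinj).symm.toMonoidHom (MulEquiv.injective _))
    (i := true) (h := ULift.up h)
    (fun hfin => hh ((MulEquiv.ulift : ULift.{v} K ≃* K).toMonoidHom.isOfFinOrder hfin))
    ⟨inl h, hhN, rfl⟩
  intro y hy
  obtain ⟨u, hu⟩ := hle ⟨y, hy, rfl⟩
  refine ⟨u.down, ?_⟩
  rw [← ofCoprodI_toCoprodI K L y, ← hu]
  rfl

end Monoid.Coprod

theorem maximal_amenable_in_free_product_general (K L : Type*) [Group K] [Group L]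
    (hK : Monoid.IsTorsionFree K) (hKnt : Nontrivial K) (H : Subgroup K)
    (hH : MaximalAmenable H) :
    MaximalAmenable (H.map (Monoid.Coprod.inl : K →* Monoid.Coprod K L)) := by
  obtain ⟨h, hhH, hh1⟩ := H.bot_or_exists_ne_one.resolve_left hH.ne_bot
  refine hH.map_of_injective _ Monoid.Coprod.inl_injective fun N hN hHN => ?_
  exact Monoid.Coprod.le_range_inl_of_isAmenable hN (hK h hh1) (hHN ⟨h, hhH, rfl⟩)

theorem maximal_amenable_in_free_product (K L : Type*) [Group K] [Group L]
    [Countable K] [Countable L] (hK : Monoid.IsTorsionFree K) (hL : Monoid.IsTorsionFree L)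
    (hKnt : Nontrivial K) (H : Subgroup K) (hH : MaximalAmenable H) :
    MaximalAmenable (H.map (Monoid.Coprod.inl : K →* Monoid.Coprod K L)) :=
  maximal_amenable_in_free_product_general K L hK hKnt H hH
end
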